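/- arXiv:0905.1049 — 2 statements merged into one kernel-verified Lean document; each statement's English description precedes it below -/
import Mathlib

section
/- For any u, v ∈ k₀⟨X⟩ and any nonnegative integers m, n, the element [u,v]·uᵐvⁿ is central modulo T⁽³⁾; that is, for every w ∈ k₀⟨X⟩ one has [w, [u,v]·uᵐvⁿ] ∈ T⁽³⁾ (when m = 0 or n = 0 the corresponding factor uᵐ or vⁿ is omitted). -/
noncomputable section

/-- The ring commutator `[a,b] = a*b - b*a`. -/
def ringComm {A : Type*} [Ring A] (a b : A) : A := a * b - b * a

variable (k : Type*) [Field k]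

/-- The free unitary associative `k`-algebra `k⟨X⟩` on countably many generators. -/
abbrev F : Type _ := FreeAlgebra k ℕ

/-- The generator `x_{i+1}`: we index the variables from `0`, so `X k i` is the
variable `x_{i+1}` of the paper. -/
def X (i : ℕ) : F k := FreeAlgebra.ι k i

/-- `k₀⟨X⟩`, the free nonunitary associative algebra: the non-unital subalgebra of
`k⟨X⟩` generated by the variables, i.e. the polynomials with zero constant term. -/
def A0 : NonUnitalSubalgebra k (F k) := NonUnitalAlgebra.adjoin k (Set.range (FreeAlgebra.ι k))

/-- `T⁽³⁾`: the two-sided (non-unital) ideal of `k₀⟨X⟩` generated — including the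
generators themselves — by all `[[u,v],w]` with `u,v,w ∈ k₀⟨X⟩`. -/
def T3 : Submodule k (F k) := Submodule.span k
  {x | ∃ u ∈ A0 k, ∃ v ∈ A0 k, ∃ w ∈ A0 k,
    x = ringComm (ringComm u v) w ∨
    (∃ a ∈ A0 k, x = a * ringComm (ringComm u v) w) ∨
    (∃ b ∈ A0 k, x = ringComm (ringComm u v) w * b) ∨
    (∃ a ∈ A0 k, ∃ b ∈ A0 k, x = a * ringComm (ringComm u v) w * b)}

variable {k}

lemma gen_mem {u v w : F k} (hu : u ∈ A0 k) (hv : v ∈ A0 k) (hw : w ∈ A0 k) :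
    ringComm (ringComm u v) w ∈ T3 k :=
  Submodule.subset_span ⟨u, hu, v, hv, w, hw, Or.inl rfl⟩

lemma T3_mul_left {x t : F k} (hx : x ∈ A0 k) (ht : t ∈ T3 k) : x * t ∈ T3 k := by
  induction ht using Submodule.span_induction with
  | mem y hy =>
    obtain ⟨u, hu, v, hv, w, hw, h⟩ := hy
    rcases h with rfl | ⟨a, ha, rfl⟩ | ⟨b, hb, rfl⟩ | ⟨a, ha, b, hb, rfl⟩
    · exact Submodule.subset_span ⟨u, hu, v, hv, w, hw, Or.inr (Or.inl ⟨x, hx, rfl⟩)⟩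
    · exact Submodule.subset_span ⟨u, hu, v, hv, w, hw,
        Or.inr (Or.inl ⟨x * a, mul_mem hx ha, (mul_assoc _ _ _).symm⟩)⟩
    · exact Submodule.subset_span ⟨u, hu, v, hv, w, hw,
        Or.inr (Or.inr (Or.inr ⟨x, hx, b, hb, (mul_assoc _ _ _).symm⟩))⟩
    · exact Submodule.subset_span ⟨u, hu, v, hv, w, hw,
        Or.inr (Or.inr (Or.inr ⟨x * a, mul_mem hx ha, b, hb, by noncomm_ring⟩))⟩
  | zero => simp
  | add a b _ _ ha hb => rw [mul_add]; exact add_mem ha hb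
  | smul r a _ ha => rw [mul_smul_comm]; exact Submodule.smul_mem _ _ ha

lemma T3_mul_right {x t : F k} (ht : t ∈ T3 k) (hx : x ∈ A0 k) : t * x ∈ T3 k := by
  induction ht using Submodule.span_induction with
  | mem y hy =>
    obtain ⟨u, hu, v, hv, w, hw, h⟩ := hy
    rcases h with rfl | ⟨a, ha, rfl⟩ | ⟨b, hb, rfl⟩ | ⟨a, ha, b, hb, rfl⟩
    · exact Submodule.subset_span ⟨u, hu, v, hv, w, hw,
        Or.inr (Or.inr (Or.inl ⟨x, hx, rfl⟩))⟩
    · exact Submodule.subset_span ⟨u, hu, v, hv, w, hw,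
        Or.inr (Or.inr (Or.inr ⟨a, ha, x, hx, rfl⟩))⟩
    · exact Submodule.subset_span ⟨u, hu, v, hv, w, hw,
        Or.inr (Or.inr (Or.inl ⟨b * x, mul_mem hb hx, mul_assoc _ _ _⟩))⟩
    · exact Submodule.subset_span ⟨u, hu, v, hv, w, hw,
        Or.inr (Or.inr (Or.inr ⟨a, ha, b * x, mul_mem hb hx, by noncomm_ring⟩))⟩
  | zero => simp
  | add a b _ _ ha hb => rw [add_mul]; exact add_mem ha hb
  | smul r a _ ha => rw [smul_mul_assoc]; exact Submodule.smul_mem _ _ ha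

/-- "in `A0` or equal to `1`" -/
def A1 (x : F k) : Prop := x ∈ A0 k ∨ x = 1

lemma A1_of_A0 {x : F k} (hx : x ∈ A0 k) : A1 x := Or.inl hx

lemma A1_pow {x : F k} (hx : x ∈ A0 k) : ∀ m : ℕ, A1 (x ^ m)
  | 0 => Or.inr (pow_zero x)
  | m + 1 => by
    rcases A1_pow hx m with h | h
    · exact Or.inl (by rw [pow_succ]; exact mul_mem h hx)
    · exact Or.inl (by rw [pow_succ, h, one_mul]; exact hx)

lemma A1_mul {x y : F k} (hx : A1 x) (hy : A1 y) : A1 (x * y) := by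
  rcases hx with hx | rfl
  · rcases hy with hy | rfl
    · exact Or.inl (mul_mem hx hy)
    · rw [mul_one]; exact Or.inl hx
  · rw [one_mul]; exact hy

lemma A1_comm {x y : F k} (hx : A1 x) (hy : A1 y) : A1 (ringComm x y) := by
  rcases hx with hx | rfl
  · rcases hy with hy | rfl
    · exact Or.inl (sub_mem (mul_mem hx hy) (mul_mem hy hx))
    · exact Or.inl (by simp only [ringComm, mul_one, one_mul, sub_self]; exact zero_mem _)
  · exact Or.inl (by simp only [ringComm, mul_one, one_mul, sub_self]; exact zero_mem _)

lemma T3_mul_left1 {x t : F k} (hx : A1 x) (ht : t ∈ T3 k) : x * t ∈ T3 k := by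
  rcases hx with hx | rfl
  · exact T3_mul_left hx ht
  · rwa [one_mul]

lemma T3_mul_right1 {x t : F k} (ht : t ∈ T3 k) (hx : A1 x) : t * x ∈ T3 k := by
  rcases hx with hx | rfl
  · exact T3_mul_right ht hx
  · rwa [mul_one]

lemma gen_mem1 {u v x : F k} (hu : u ∈ A0 k) (hv : v ∈ A0 k) (hx : A1 x) :
    ringComm (ringComm u v) x ∈ T3 k := by
  rcases hx with hx | rfl
  · exact gen_mem hu hv hx
  · simp [ringComm]

/-- Key lemma: `[a,b][d,a] ∈ T³`. -/
lemma prodShare {a b d : F k} (ha : a ∈ A0 k) (hb : b ∈ A0 k) (hd : d ∈ A0 k) :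
    ringComm a b * ringComm d a ∈ T3 k := by
  have key : ringComm a b * ringComm d a =
      ringComm (ringComm (a * d) b) a - a * ringComm (ringComm d b) a
        - ringComm (ringComm a b) a * d := by
    simp only [ringComm]; noncomm_ring
  rw [key]
  exact sub_mem (sub_mem (gen_mem (mul_mem ha hd) hb ha)
    (T3_mul_left ha (gen_mem hd hb ha))) (T3_mul_right (gen_mem ha hb ha) hd)

lemma mainM {u v w : F k} (hu : u ∈ A0 k) (hv : v ∈ A0 k) (hw : w ∈ A0 k)
    {p q : F k} (hp : A1 p) (hq : A1 q)
    (h1 : ringComm u v * ringComm w p ∈ T3 k)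
    (h2 : ringComm u v * ringComm w q ∈ T3 k) :
    ringComm u v * ringComm w (p * q) ∈ T3 k := by
  have key : ringComm u v * ringComm w (p * q) =
      (ringComm u v * ringComm w p) * q + p * (ringComm u v * ringComm w q)
        + ringComm (ringComm u v) p * ringComm w q := by
    simp only [ringComm]; noncomm_ring
  rw [key]
  exact add_mem (add_mem (T3_mul_right1 h1 hq) (T3_mul_left1 hp h2))
    (T3_mul_right1 (gen_mem1 hu hv hp) (A1_comm (A1_of_A0 hw) hq))

lemma mainP {u v w : F k} (hu : u ∈ A0 k) (hv : v ∈ A0 k) (hw : w ∈ A0 k)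
    {x : F k} (hx : x ∈ A0 k) (hbase : ringComm u v * ringComm w x ∈ T3 k) :
    ∀ m : ℕ, ringComm u v * ringComm w (x ^ m) ∈ T3 k
  | 0 => by simp [ringComm]
  | m + 1 => by
    rw [pow_succ]
    exact mainM hu hv hw (A1_pow hx m) (A1_of_A0 hx)
      (mainP hu hv hw hx hbase m) hbase

/-- For any u, v ∈ k₀⟨X⟩ and nonnegative integers m, n, the element [u,v]·uᵐvⁿ is
central modulo T⁽³⁾: for every w ∈ k₀⟨X⟩, [w, [u,v]·uᵐvⁿ] ∈ T⁽³⁾. -/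
theorem statement2 :
    ∀ u ∈ A0 k, ∀ v ∈ A0 k, ∀ m n : ℕ, ∀ w ∈ A0 k,
      ringComm w (ringComm u v * u ^ m * v ^ n) ∈ T3 k := by
  intro u hu v hv m n w hw
  have hc1 : ringComm u v * ringComm w u ∈ T3 k := prodShare hu hv hw
  have hc2 : ringComm u v * ringComm w v ∈ T3 k := by
    have h := prodShare hv hu hw
    have key : ringComm u v * ringComm w v = -(ringComm v u * ringComm w v) := by
      simp only [ringComm]; noncomm_ring
    rw [key]; exact neg_mem h
  have hL2 : ringComm u v * ringComm w (u ^ m * v ^ n) ∈ T3 k :=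
    mainM hu hv hw (A1_pow hu m) (A1_pow hv n)
      (mainP hu hv hw hu hc1 m) (mainP hu hv hw hv hc2 n)
  have key : ringComm w (ringComm u v * u ^ m * v ^ n) =
      ringComm u v * ringComm w (u ^ m * v ^ n)
        - ringComm (ringComm u v) w * (u ^ m * v ^ n) := by
    simp only [ringComm]; noncomm_ring
  rw [key]
  exact sub_mem hL2 (T3_mul_right1 (gen_mem hu hv hw)
    (A1_mul (A1_pow hu m) (A1_pow hv n)))

end
end

section
/- Let k be a field of characteristic p ≠ 2. Then k⟨X⟩ = R₁ + S₁ + T⁽³⁾: every element of the free unitary algebra is a sum of an element of R₁, an element of S₁, and an element of T⁽³⁾. -/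
noncomputable section

variable (k : Type*) [Field k]

/-- `T⁽³⁾` for the unitary algebra: the two-sided ideal of `k⟨X⟩` generated by all
`[[u,v],w]` with `u,v,w ∈ k⟨X⟩`. -/
def T3U : Submodule k (F k) := Submodule.span k
  {x | ∃ u v w a b : F k, x = a * ringComm (ringComm u v) w * b}

/-- The smallest T-space `Wˢ` of the unitary algebra `k⟨X⟩` containing `W`: the linear
span of all images of elements of `W` under unital algebra endomorphisms of `k⟨X⟩`
(equivalently, under substitutions of arbitrary elements of `k⟨X⟩` for the variables). -/
def TspaceU (W : Set (F k)) : Submodule k (F k) :=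
  Submodule.span k {y | ∃ σ : ℕ → F k, ∃ w ∈ W, y = FreeAlgebra.lift k σ w}

/-- The beginning `∏_{r=1}^{t} x_{i_r}^{α_r}` of an `SS`-element, encoded by the list
`bs = [(i₁,α₁),…,(i_t,α_t)]` of (index, exponent) pairs. -/
def begProd (bs : List (ℕ × ℕ)) : F k := (bs.map (fun q => X k q.1 ^ q.2)).prod

/-- The end `∏_{r=1}^{s} [x_{j_{2r-1}},x_{j_{2r}}]·x_{j_{2r-1}}^{β_{2r-1}}·x_{j_{2r}}^{β_{2r}}`
of an `SS`-element, encoded by the list of pairs `((j_{2r-1},β_{2r-1}),(j_{2r},β_{2r}))`. -/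
def endProd (es : List ((ℕ × ℕ) × (ℕ × ℕ))) : F k :=
  (es.map (fun q =>
    ringComm (X k q.1.1) (X k q.2.1) * X k q.1.1 ^ q.1.2 * X k q.2.1 ^ q.2.2)).prod

/-- The list `j₁, j₂, …, j_{2s}` of variable indices occurring in the end. -/
def endIdx : List ((ℕ × ℕ) × (ℕ × ℕ)) → List ℕ
  | [] => []
  | q :: t => q.1.1 :: q.2.1 :: endIdx t

/-- The side conditions defining membership in the set `SS`: not both parts empty,
beginning indices `i₁ < ⋯ < i_t` strictly increasing with all exponents `α_r ≥ 1`,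
end indices `j₁ < ⋯ < j_{2s}` strictly increasing, and the two index sets disjoint
(all exponents `β_r ≥ 0` is automatic in `ℕ`). -/
def SSElt (bs : List (ℕ × ℕ)) (es : List ((ℕ × ℕ) × (ℕ × ℕ))) : Prop :=
  (bs ≠ [] ∨ es ≠ []) ∧ List.Chain' (· < ·) (bs.map Prod.fst) ∧ (∀ q ∈ bs, 1 ≤ q.2) ∧
    List.Chain' (· < ·) (endIdx es) ∧ ∀ q ∈ bs, q.1 ∉ endIdx es

/-- `R₁`: the span of `1` together with all `u ∈ SS` whose beginning is nonempty and,
if `p > 2`, such that some variable occurring in the beginning of `u` has degree in `u`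
not divisible by `p`.  (Since the beginning and end indices are disjoint, the degree in
`u` of a beginning variable is its exponent there; and for `p = 0` the divisibility
condition is automatic because all beginning exponents are `≥ 1`.) -/
def R1space (p : ℕ) : Submodule k (F k) :=
  Submodule.span k
    ({(1 : F k)} ∪ {u | ∃ bs es, SSElt bs es ∧ bs ≠ [] ∧ (∃ q ∈ bs, ¬ (p ∣ q.2)) ∧
      u = begProd k bs * endProd k es})

/-- `x₁ᵖ·∏_{i=1}^{m} [x_{2i},x_{2i+1}]·x_{2i}^{p−1}·x_{2i+1}^{p−1}` (the list factor
indexed by `i` corresponds to the paper index `i+1`; variables are 0-indexed). -/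
def s1chain (p m : ℕ) : F k :=
  X k 0 ^ p * ((List.range m).map (fun i =>
    ringComm (X k (2*i+1)) (X k (2*i+2)) * X k (2*i+1) ^ (p-1) * X k (2*i+2) ^ (p-1))).prod

/-- `S₁`: equal to `S = {[x₁,x₂]}ˢ` if `char k = 0`, and to
`{[x₁,x₂], x₁ᵖ}ˢ + {x₁ᵖ·∏_{i=1}^{m}[x_{2i},x_{2i+1}]x_{2i}^{p−1}x_{2i+1}^{p−1} : m ≥ 1}ˢ`
if `char k = p > 2`, with T-spaces taken in the unitary algebra `k⟨X⟩`. -/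
def S1space (p : ℕ) : Submodule k (F k) :=
  if p = 0 then TspaceU k {ringComm (X k 0) (X k 1)}
  else TspaceU k {ringComm (X k 0) (X k 1), X k 0 ^ p} ⊔
    TspaceU k {u | ∃ m, 1 ≤ m ∧ u = s1chain k p m}

/-!
Modulo `T⁽³⁾` every commutator is central, two commutators sharing a variable multiply to
zero (here `2` must be invertible), `p`-th powers are central and `(cd)ᵖ ≡ cᵖdᵖ` because the
correction term carries the coefficient `C(p,2)`. Hence modulo `R₁ + S₁ + T⁽³⁾` the letters of a
word may be permuted (a transposition costs a shorter word times one more commutator), and the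
commutator factors may be re-paired and ordered up to sign. By induction on the length, every
word is therefore congruent to `1` or to an element of `SS`. Such an element lies in `R₁` unless
all exponents of its beginning are divisible by `p`; then each end factor `[y,z]yᵇzᶜ` is, up to
central `p`-th powers, a multiple of `[y, zyᵇzᶜ]` or of `[yzᶜyᵇ, z]` when `c + 1` or `b + 1` is
invertible, and the chain factor `[y,z]yᵖ⁻¹zᵖ⁻¹` otherwise; multiplying these out gives a
commutator or a substitution instance of `x₁ᵖ·∏[x₂ᵢ,x₂ᵢ₊₁]x₂ᵢᵖ⁻¹x₂ᵢ₊₁ᵖ⁻¹`, both in `S₁`.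
-/

section CommutatorIdentities

variable {A : Type*} [Ring A]

@[simp] theorem ringComm_self (a : A) : ringComm a a = 0 := by simp [ringComm]

theorem ringComm_swap (a b : A) : ringComm a b = -ringComm b a := by
  simp [ringComm]

@[simp] theorem ringComm_one_right (a : A) : ringComm a 1 = 0 := by simp [ringComm]

theorem ringComm_mul_right (a b c : A) :
    ringComm a (b * c) = ringComm a b * c + b * ringComm a c := by
  unfold ringComm; noncomm_ring

theorem ringComm_smul_left {R : Type*} [CommRing R] [Algebra R A] (r : R) (a b : A) :
    ringComm (r • a) b = r • ringComm a b := by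
  simp [ringComm, smul_sub]

@[simp] theorem ringComm_pow_self_right (a : A) (n : ℕ) : ringComm a (a ^ n) = 0 :=
  sub_eq_zero.mpr ((Commute.self_pow a n).eq)

end CommutatorIdentities

section T3

variable {k}

theorem ringComm_ringComm_mul_mem (u v w a b : F k) :
    a * ringComm (ringComm u v) w * b ∈ T3U k :=
  Submodule.subset_span ⟨u, v, w, a, b, rfl⟩

theorem ringComm_ringComm_mem (u v w : F k) : ringComm (ringComm u v) w ∈ T3U k := by
  simpa using ringComm_ringComm_mul_mem u v w 1 1

theorem T3U.mul_mem_left {x : F k} (a : F k) (hx : x ∈ T3U k) : a * x ∈ T3U k := by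
  induction hx using Submodule.span_induction with
  | mem x hx =>
    obtain ⟨u, v, w, c, d, rfl⟩ := hx
    simpa only [mul_assoc] using ringComm_ringComm_mul_mem u v w (a * c) d
  | zero => simp
  | add x y _ _ hx hy => rw [mul_add]; exact add_mem hx hy
  | smul c x _ hx => rw [mul_smul_comm]; exact Submodule.smul_mem _ _ hx

theorem T3U.mul_mem_right {x : F k} (b : F k) (hx : x ∈ T3U k) : x * b ∈ T3U k := by
  induction hx using Submodule.span_induction with
  | mem x hx =>
    obtain ⟨u, v, w, c, d, rfl⟩ := hx
    simpa only [mul_assoc] using ringComm_ringComm_mul_mem u v w c (d * b)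
  | zero => simp
  | add x y _ _ hx hy => rw [add_mul]; exact add_mem hx hy
  | smul c x _ hx => rw [smul_mul_assoc]; exact Submodule.smul_mem _ _ hx

theorem T3U.smodEq_mul_left {x y : F k} (a : F k) (h : x ≡ y [SMOD T3U k]) :
    a * x ≡ a * y [SMOD T3U k] := by
  rw [SModEq.sub_mem, ← mul_sub]
  exact T3U.mul_mem_left a (SModEq.sub_mem.mp h)

theorem T3U.smodEq_mul_right {x y : F k} (b : F k) (h : x ≡ y [SMOD T3U k]) :
    x * b ≡ y * b [SMOD T3U k] := by
  rw [SModEq.sub_mem, ← sub_mul]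
  exact T3U.mul_mem_right b (SModEq.sub_mem.mp h)

theorem T3U.smodEq_mul {x y x' y' : F k} (h : x ≡ y [SMOD T3U k])
    (h' : x' ≡ y' [SMOD T3U k]) : x * x' ≡ y * y' [SMOD T3U k] :=
  (T3U.smodEq_mul_right x' h).trans (T3U.smodEq_mul_left y h')

def IsT3Central (c : F k) : Prop := ∀ a : F k, ringComm a c ∈ T3U k

theorem isT3Central_ringComm (u v : F k) : IsT3Central (ringComm u v) := fun a => by
  rw [ringComm_swap]; exact neg_mem (ringComm_ringComm_mem u v a)

theorem isT3Central_one : IsT3Central (1 : F k) := fun a => by simp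

theorem IsT3Central.mul {c d : F k} (hc : IsT3Central c) (hd : IsT3Central d) :
    IsT3Central (c * d) := fun a => by
  rw [ringComm_mul_right]
  exact add_mem (T3U.mul_mem_right d (hc a)) (T3U.mul_mem_left c (hd a))

theorem isT3Central_list_prod {l : List (F k)} (h : ∀ c ∈ l, IsT3Central c) :
    IsT3Central l.prod := by
  induction l with
  | nil => exact isT3Central_one
  | cons c l ih =>
    rw [List.prod_cons]
    exact (h c List.mem_cons_self).mul (ih fun d hd => h d (List.mem_cons_of_mem c hd))

theorem IsT3Central.of_smodEq {c d : F k} (hd : IsT3Central d) (h : c ≡ d [SMOD T3U k]) :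
    IsT3Central c := fun a => by
  have hcd := SModEq.sub_mem.mp h
  have : ringComm a c = ringComm a d + (a * (c - d) - (c - d) * a) := by
    simp only [ringComm]; noncomm_ring
  rw [this]
  exact add_mem (hd a) (sub_mem (T3U.mul_mem_left a hcd) (T3U.mul_mem_right a hcd))

theorem IsT3Central.mul_comm {c : F k} (hc : IsT3Central c) (a : F k) :
    a * c ≡ c * a [SMOD T3U k] :=
  SModEq.sub_mem.mpr (hc a)

theorem IsT3Central.ringComm_mul {c : F k} (hc : IsT3Central c) (u v : F k) :
    ringComm u v * c ≡ ringComm u (v * c) [SMOD T3U k] := by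
  rw [SModEq.sub_mem, ringComm_mul_right, sub_add_cancel_left]
  exact neg_mem (T3U.mul_mem_left v (hc u))

theorem ringComm_pow_succ_smodEq (a c : F k) (n : ℕ) :
    ringComm a (c ^ (n + 1)) ≡ (n + 1) • (c ^ n * ringComm a c) [SMOD T3U k] := by
  induction n with
  | zero => simp [SModEq.refl]
  | succ n ih =>
    have hcomm : ringComm a c * c ≡ c * ringComm a c [SMOD T3U k] :=
      ((isT3Central_ringComm a c).mul_comm c).symm
    calc ringComm a (c ^ (n + 1 + 1))
        = ringComm a (c ^ (n + 1)) * c + c ^ (n + 1) * ringComm a c := by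
          rw [pow_succ _ (n + 1), ringComm_mul_right]
      _ ≡ (n + 1) • (c ^ n * (ringComm a c * c)) + c ^ (n + 1) * ringComm a c
          [SMOD T3U k] := by
          simpa only [smul_mul_assoc, mul_assoc] using
            (T3U.smodEq_mul_right c ih).add SModEq.rfl
      _ ≡ (n + 1) • (c ^ n * (c * ringComm a c)) + c ^ (n + 1) * ringComm a c
          [SMOD T3U k] := ((T3U.smodEq_mul_left _ hcomm).nsmul _).add SModEq.rfl
      _ = (n + 1 + 1) • (c ^ (n + 1) * ringComm a c) := by
          rw [← mul_assoc, ← pow_succ, succ_nsmul _ (n + 1)]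

theorem isT3Central_pow_of_cast_eq_zero {p : ℕ} (hp : (p : k) = 0) (u : F k) :
    IsT3Central (u ^ p) := fun a => by
  rcases p with _ | n
  · simp
  · have hn : (n + 1) • (u ^ n * ringComm a u) = 0 := by
      rw [← Nat.cast_smul_eq_nsmul k, hp, zero_smul]
    have h := ringComm_pow_succ_smodEq a u n
    rw [hn] at h
    exact SModEq.zero.mp h

end T3

section CommutatorProducts

variable {k}

theorem ringComm_mul_ringComm_add_mem (a b c d : F k) :
    ringComm a b * ringComm c d + ringComm c b * ringComm a d ∈ T3U k := by
  have key : ringComm a b * ringComm c d + ringComm c b * ringComm a d =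
      ringComm (ringComm c b) a * d + b * ringComm (ringComm c d) a
        - ringComm (ringComm c (b * d)) a := by
    unfold ringComm; noncomm_ring
  rw [key]
  exact sub_mem (add_mem (T3U.mul_mem_right d (ringComm_ringComm_mem _ _ _))
    (T3U.mul_mem_left b (ringComm_ringComm_mem _ _ _))) (ringComm_ringComm_mem _ _ _)

theorem ringComm_mul_ringComm_mem (h2 : (2 : k) ≠ 0) {a b c d : F k}
    (h : a = c ∨ a = d ∨ b = c ∨ b = d) : ringComm a b * ringComm c d ∈ T3U k := by
  have half : ∀ x : F k, x + x ∈ T3U k → x ∈ T3U k := fun x hx =>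
    ((T3U k).smul_mem_iff h2).mp (by rwa [two_smul])
  rcases h with rfl | rfl | rfl | rfl
  · exact half _ (ringComm_mul_ringComm_add_mem a b a d)
  · simpa using ringComm_mul_ringComm_add_mem a b c a
  · simpa using ringComm_mul_ringComm_add_mem a b b d
  · refine half _ ?_
    have hswap := SModEq.sub_mem.mp ((isT3Central_ringComm c b).mul_comm (ringComm a b))
    simpa [← two_smul k] using add_mem (ringComm_mul_ringComm_add_mem a b c b) hswap

theorem IsT3Central.mul_mul_mul_smodEq {t : F k} (ht : IsT3Central t) (z w w' : F k) :
    z * w * t * w' ≡ z * t * (w * w') [SMOD T3U k] := by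
  simpa only [mul_assoc] using T3U.smodEq_mul_right w' (T3U.smodEq_mul_left z (ht.mul_comm w))

theorem mul_ringComm_pow_mem {z c d : F k} (hz : z * ringComm c d ∈ T3U k) (w w' : F k)
    (m : ℕ) : z * w * ringComm c (d ^ m) * w' ∈ T3U k := by
  rcases m with _ | e
  · simp
  · have h := T3U.smodEq_mul_right w' (T3U.smodEq_mul_left (z * w) (ringComm_pow_succ_smodEq c d e))
    refine SModEq.zero.mp (h.trans (SModEq.zero.mpr ?_))
    have hmove := (isT3Central_ringComm c d).mul_mul_mul_smodEq z (w * d ^ e) w'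
    have hmem := SModEq.zero.mp (hmove.trans
      (SModEq.zero.mpr (T3U.mul_mem_right (w * d ^ e * w') hz)))
    convert Submodule.smul_of_tower_mem _ (e + 1) hmem using 1
    simp only [mul_smul_comm, smul_mul_assoc, mul_assoc]

theorem mul_ringComm_pow_pow_mem {z c d : F k} (hz : z * ringComm c d ∈ T3U k) (w w' : F k)
    (i j : ℕ) : z * w * ringComm (c ^ i) (d ^ j) * w' ∈ T3U k := by
  refine mul_ringComm_pow_mem ?_ w w' j
  have hdc : z * ringComm d c ∈ T3U k := by
    rw [ringComm_swap, mul_neg]; exact neg_mem hz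
  simpa [ringComm_swap (c ^ i)] using neg_mem (mul_ringComm_pow_mem hdc 1 1 i)

end CommutatorProducts

section PowersAndFactors

variable {k}

theorem ringComm_mul_pow_comm (h2 : (2 : k) ≠ 0) (y z w w' : F k) (i j : ℕ) :
    ringComm y z * w * (z ^ j * y ^ i) * w' ≡
      ringComm y z * w * (y ^ i * z ^ j) * w' [SMOD T3U k] := by
  have hzz : ringComm y z * ringComm y z ∈ T3U k := ringComm_mul_ringComm_mem h2 (Or.inl rfl)
  rw [SModEq.sub_mem]
  have hdiff : ringComm y z * w * (z ^ j * y ^ i) * w' - ringComm y z * w * (y ^ i * z ^ j) * w' =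
      -(ringComm y z * w * ringComm (y ^ i) (z ^ j) * w') := by
    simp only [ringComm]; noncomm_ring
  rw [hdiff]
  exact neg_mem (mul_ringComm_pow_pow_mem hzz w w' i j)

theorem pow_mul_pow_mul_mul_smodEq (c d : F k) (n : ℕ) :
    c ^ (n + 1) * d ^ (n + 1) * (c * d) ≡ c ^ (n + 2) * d ^ (n + 2) -
      (n + 1) • (ringComm c d * c ^ (n + 1) * d ^ (n + 1)) [SMOD T3U k] := by
  have hsplit : c ^ (n + 1) * d ^ (n + 1) * (c * d) =
      c ^ (n + 2) * d ^ (n + 2) - c ^ (n + 1) * ringComm c (d ^ (n + 1)) * d := by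
    simp only [ringComm, pow_succ]; noncomm_ring
  have hpow := T3U.smodEq_mul_right d
    (T3U.smodEq_mul_left (c ^ (n + 1)) (ringComm_pow_succ_smodEq c d n))
  have hcentral := (isT3Central_ringComm c d).mul_mul_mul_smodEq 1 (c ^ (n + 1) * d ^ n) d
  rw [hsplit]
  refine SModEq.rfl.sub (hpow.trans ?_)
  simp only [mul_smul_comm, smul_mul_assoc]
  refine SModEq.nsmul ?_ _
  simpa only [one_mul, mul_assoc, ← pow_succ] using hcentral

theorem mul_pow_succ_smodEq (h2 : (2 : k) ≠ 0) (c d : F k) (n : ℕ) :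
    (c * d) ^ (n + 1) ≡ c ^ (n + 1) * d ^ (n + 1) -
      (n + 1).choose 2 • (ringComm c d * c ^ n * d ^ n) [SMOD T3U k] := by
  induction n with
  | zero => simp [SModEq.refl]
  | succ n ih =>
    have hcomm : ringComm c d * c ^ n * d ^ n * (c * d) ≡
        ringComm c d * c ^ (n + 1) * d ^ (n + 1) [SMOD T3U k] := by
      simpa only [pow_one, pow_succ _ n, mul_assoc] using ringComm_mul_pow_comm h2 c d (c ^ n) d 1 n
    calc (c * d) ^ (n + 1 + 1) = (c * d) ^ (n + 1) * (c * d) := pow_succ _ _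
      _ ≡ (c ^ (n + 1) * d ^ (n + 1) - (n + 1).choose 2 • (ringComm c d * c ^ n * d ^ n)) *
          (c * d) [SMOD T3U k] := T3U.smodEq_mul_right _ ih
      _ = c ^ (n + 1) * d ^ (n + 1) * (c * d) -
          (n + 1).choose 2 • (ringComm c d * c ^ n * d ^ n * (c * d)) := by
          rw [sub_mul, smul_mul_assoc]
      _ ≡ c ^ (n + 2) * d ^ (n + 2) - (n + 1) • (ringComm c d * c ^ (n + 1) * d ^ (n + 1)) -
          (n + 1).choose 2 • (ringComm c d * c ^ (n + 1) * d ^ (n + 1)) [SMOD T3U k] :=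
          (pow_mul_pow_mul_mul_smodEq c d n).sub (hcomm.nsmul _)
      _ = c ^ (n + 1 + 1) * d ^ (n + 1 + 1) -
          (n + 1 + 1).choose 2 • (ringComm c d * c ^ (n + 1) * d ^ (n + 1)) := by
          rw [sub_sub, ← add_nsmul, Nat.choose_succ_succ' (n + 1) 1, Nat.choose_one_right,
            add_comm (n + 1)]

theorem mul_pow_smodEq (h2 : (2 : k) ≠ 0) {p : ℕ} (hp : (p.choose 2 : k) = 0) (c d : F k) :
    (c * d) ^ p ≡ c ^ p * d ^ p [SMOD T3U k] := by
  rcases p with _ | n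
  · simp [SModEq.refl]
  · have hzero : (n + 1).choose 2 • (ringComm c d * c ^ n * d ^ n) = 0 := by
      rw [← Nat.cast_smul_eq_nsmul k, hp, zero_smul]
    simpa [hzero] using mul_pow_succ_smodEq h2 c d n

theorem ringComm_mul_pow_mul_pow_smodEq (h2 : (2 : k) ≠ 0) (y z : F k) (a b : ℕ) :
    ringComm y (z * y ^ a * z ^ b) ≡ (b + 1) • (ringComm y z * y ^ a * z ^ b) [SMOD T3U k] := by
  have hsplit : ringComm y (z * y ^ a * z ^ b) =
      ringComm y z * y ^ a * z ^ b + z * y ^ a * ringComm y (z ^ b) := by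
    rw [mul_assoc, ringComm_mul_right, ringComm_mul_right, ringComm_pow_self_right]
    noncomm_ring
  rw [hsplit]
  rcases b with _ | e
  · simp [SModEq.refl]
  · have hpow := T3U.smodEq_mul_left (z * y ^ a) (ringComm_pow_succ_smodEq y z e)
    have hcentral := (isT3Central_ringComm y z).mul_comm (z * y ^ a * z ^ e)
    have hswap := ringComm_mul_pow_comm h2 y z 1 (z ^ e) a 1
    have hterm : z * y ^ a * (z ^ e * ringComm y z) ≡
        ringComm y z * y ^ a * z ^ (e + 1) [SMOD T3U k] := by
      simp only [mul_assoc, mul_one, pow_one] at hcentral hswap ⊢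
      rw [pow_succ']
      exact hcentral.trans hswap
    calc _ ≡ ringComm y z * y ^ a * z ^ (e + 1) + (e + 1) • (ringComm y z * y ^ a * z ^ (e + 1))
          [SMOD T3U k] := SModEq.rfl.add (hpow.trans (by rw [mul_smul_comm]; exact hterm.nsmul _))
      _ = (e + 1 + 1) • (ringComm y z * y ^ a * z ^ (e + 1)) := by rw [succ_nsmul' _ (e + 1)]

theorem ringComm_pow_mul_pow_mul_smodEq (h2 : (2 : k) ≠ 0) (y z : F k) (a b : ℕ) :
    ringComm (y * z ^ b * y ^ a) z ≡ (a + 1) • (ringComm y z * y ^ a * z ^ b) [SMOD T3U k] := by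
  have h := (ringComm_mul_pow_mul_pow_smodEq h2 z y b a).neg
  rw [← ringComm_swap, ← smul_neg, ← neg_mul, ← neg_mul, ← ringComm_swap] at h
  refine h.trans (SModEq.nsmul ?_ _)
  simpa only [mul_one, mul_assoc] using ringComm_mul_pow_comm h2 y z 1 1 a b

def chainFactor (p : ℕ) (y z : F k) : F k := ringComm y z * y ^ (p - 1) * z ^ (p - 1)

theorem isT3Central_chainFactor (h2 : (2 : k) ≠ 0) (p : ℕ) (y z : F k) :
    IsT3Central (chainFactor p y z) := fun a => by
  have hsplit : ringComm a (chainFactor p y z) =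
      ringComm a (ringComm y z) * y ^ (p - 1) * z ^ (p - 1) +
      ringComm y z * 1 * ringComm a (y ^ (p - 1)) * z ^ (p - 1) +
      ringComm y z * y ^ (p - 1) * ringComm a (z ^ (p - 1)) * 1 := by
    simp only [chainFactor, ringComm_mul_right, mul_one]; noncomm_ring
  rw [hsplit]
  refine add_mem (add_mem ?_ ?_) ?_
  · exact T3U.mul_mem_right _ (T3U.mul_mem_right _ (isT3Central_ringComm y z a))
  · exact mul_ringComm_pow_mem (ringComm_mul_ringComm_mem h2 (Or.inr (Or.inl rfl))) _ _ _
  · exact mul_ringComm_pow_mem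
      (ringComm_mul_ringComm_mem h2 (Or.inr (Or.inr (Or.inr rfl)))) _ _ _

end PowersAndFactors

section S1Membership

variable {k}

theorem lift_mem_TspaceU {W : Set (F k)} (σ : ℕ → F k) {w : F k} (hw : w ∈ W) :
    FreeAlgebra.lift k σ w ∈ TspaceU k W :=
  Submodule.subset_span ⟨σ, w, hw, rfl⟩

theorem ringComm_mem_S1space (p : ℕ) (u v : F k) : ringComm u v ∈ S1space k p := by
  have h : ringComm u v =
      FreeAlgebra.lift k (fun n => if n = 0 then u else v) (ringComm (X k 0) (X k 1)) := by
    simp [ringComm, X]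
  rw [h, S1space]
  split_ifs
  · exact lift_mem_TspaceU _ rfl
  · exact Submodule.mem_sup_left (lift_mem_TspaceU _ (Set.mem_insert _ _))

theorem pow_mem_S1space {p : ℕ} (hp : p ≠ 0) (u : F k) : u ^ p ∈ S1space k p := by
  have h : u ^ p = FreeAlgebra.lift k (fun _ => u) (X k 0 ^ p) := by simp [X]
  rw [h, S1space, if_neg hp]
  exact Submodule.mem_sup_left (lift_mem_TspaceU _ (Set.mem_insert_of_mem _ rfl))

def chainProd (p : ℕ) (ys : List (F k × F k)) : F k :=
  (ys.map fun y => chainFactor p y.1 y.2).prod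

theorem chainProd_append (p : ℕ) (ys ys' : List (F k × F k)) :
    chainProd p (ys ++ ys') = chainProd p ys * chainProd p ys' := by
  simp [chainProd]

theorem map_range_length_getD {α β : Type*} (l : List α) (d : α) (f : α → β) :
    (List.range l.length).map (fun i => f (l.getD i d)) = l.map f :=
  List.ext_getElem (by simp) fun i h _ => by
    simp [List.getElem?_eq_getElem (by simpa using h : i < l.length)]

theorem pow_mul_chainProd_mem_S1space {p : ℕ} (hp : p ≠ 0) (u : F k)
    {ys : List (F k × F k)} (hys : ys ≠ []) : u ^ p * chainProd p ys ∈ S1space k p := by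
  set σ : ℕ → F k := fun n =>
    if n = 0 then u else if n % 2 = 1 then (ys.getD (n / 2) 0).1 else (ys.getD (n / 2 - 1) 0).2
  have hσ₁ : ∀ i, σ (2 * i + 1) = (ys.getD i 0).1 := fun i => by
    simp only [σ, if_neg (Nat.succ_ne_zero _), if_pos (show (2 * i + 1) % 2 = 1 by omega)]
    congr; omega
  have hσ₂ : ∀ i, σ (2 * i + 2) = (ys.getD i 0).2 := fun i => by
    simp only [σ, if_neg (Nat.succ_ne_zero _), if_neg (show ¬(2 * i + 2) % 2 = 1 by omega)]
    congr; omega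
  have h : u ^ p * chainProd p ys = FreeAlgebra.lift k σ (s1chain k p ys.length) := by
    simp only [s1chain, chainProd, map_mul, map_pow, map_list_prod, List.map_map]
    congr 1
    · simp [σ, X]
    · rw [← map_range_length_getD ys 0]
      refine congrArg List.prod (List.map_congr_left fun i _ => ?_)
      simp [ringComm, chainFactor, X, hσ₁, hσ₂]
  rw [h, S1space, if_neg hp]
  exact Submodule.mem_sup_right
    (lift_mem_TspaceU σ ⟨ys.length, List.length_pos_iff.mpr hys, rfl⟩)

end S1Membership

section S1Like

variable {k}

variable (k) in
def R1S1T3 (p : ℕ) : Submodule k (F k) := R1space k p ⊔ S1space k p ⊔ T3U k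

theorem mem_R1S1T3_of_smodEq {p : ℕ} {x y : F k} (h : x ≡ y [SMOD T3U k])
    (hy : y ∈ R1S1T3 k p) : x ∈ R1S1T3 k p := by
  rw [← sub_add_cancel x y]
  exact add_mem (Submodule.mem_sup_right (SModEq.sub_mem.mp h)) hy

theorem mem_R1S1T3_of_mem_S1space {p : ℕ} {x : F k} (h : x ∈ S1space k p) : x ∈ R1S1T3 k p :=
  Submodule.mem_sup_left (Submodule.mem_sup_right h)

theorem one_mem_R1S1T3 (p : ℕ) : (1 : F k) ∈ R1S1T3 k p :=
  Submodule.mem_sup_left (Submodule.mem_sup_left (Submodule.subset_span (Or.inl rfl)))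

theorem cast_choose_two_eq_zero {p : ℕ} [CharP k p] (h2 : (2 : k) ≠ 0) :
    (p.choose 2 : k) = 0 := by
  rcases CharP.char_is_prime_or_zero k p with hprime | rfl
  · have hp2 : p ≠ 2 := by rintro rfl; exact h2 (by exact_mod_cast CharP.cast_eq_zero k 2)
    rw [CharP.cast_eq_zero_iff k p]
    exact hprime.dvd_choose_self two_ne_zero (lt_of_le_of_ne hprime.two_le hp2.symm)
  · simp

/-- Substitution instances of the generators of `S₁` (and `1` when `p = 0`), up to `T⁽³⁾`. -/
def IsS1Like (p : ℕ) (x : F k) : Prop :=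
  (∃ a b : F k, x ≡ ringComm a b [SMOD T3U k]) ∨
    ∃ (u : F k) (ys : List (F k × F k)), (p = 0 → ys = []) ∧
      x ≡ u ^ p * chainProd p ys [SMOD T3U k]

theorem IsS1Like.mem_R1S1T3 {p : ℕ} {x : F k} (h : IsS1Like p x) : x ∈ R1S1T3 k p := by
  rcases h with ⟨a, b, h⟩ | ⟨u, ys, hys, h⟩
  · exact mem_R1S1T3_of_smodEq h (mem_R1S1T3_of_mem_S1space (ringComm_mem_S1space p a b))
  refine mem_R1S1T3_of_smodEq h ?_
  rcases eq_or_ne ys [] with rfl | hne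
  · rcases eq_or_ne p 0 with rfl | hp
    · simpa [chainProd] using one_mem_R1S1T3 (k := k) 0
    · simpa [chainProd] using mem_R1S1T3_of_mem_S1space (pow_mem_S1space hp u)
  · exact mem_R1S1T3_of_mem_S1space (pow_mul_chainProd_mem_S1space (fun hp => hne (hys hp)) u hne)

theorem IsS1Like.of_smodEq {p : ℕ} {x y : F k} (hy : IsS1Like p y) (h : x ≡ y [SMOD T3U k]) :
    IsS1Like p x := by
  rcases hy with ⟨a, b, hy⟩ | ⟨u, ys, hys, hy⟩
  · exact Or.inl ⟨a, b, h.trans hy⟩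
  · exact Or.inr ⟨u, ys, hys, h.trans hy⟩

theorem IsS1Like.of_ringComm_smodEq_nsmul {p n : ℕ} (hn : (n : k) ≠ 0) {a b w : F k}
    (h : ringComm a b ≡ n • w [SMOD T3U k]) : IsS1Like p w := by
  refine Or.inl ⟨(n : k)⁻¹ • a, b, ?_⟩
  rw [ringComm_smul_left, ← inv_smul_smul₀ hn w, Nat.cast_smul_eq_nsmul]
  exact (h.smul _).symm

theorem isT3Central_chainProd (h2 : (2 : k) ≠ 0) (p : ℕ) (ys : List (F k × F k)) :
    IsT3Central (chainProd p ys) :=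
  isT3Central_list_prod fun c hc => by
    obtain ⟨y, -, rfl⟩ := List.mem_map.mp hc
    exact isT3Central_chainFactor h2 p _ _

theorem IsS1Like.isT3Central {p : ℕ} [CharP k p] (h2 : (2 : k) ≠ 0) {x : F k}
    (h : IsS1Like p x) : IsT3Central x := by
  rcases h with ⟨a, b, h⟩ | ⟨u, ys, -, h⟩
  · exact (isT3Central_ringComm a b).of_smodEq h
  · exact ((isT3Central_pow_of_cast_eq_zero (CharP.cast_eq_zero k p) u).mul
      (isT3Central_chainProd h2 p ys)).of_smodEq h

theorem IsS1Like.mul {p : ℕ} [CharP k p] (h2 : (2 : k) ≠ 0) {x y : F k} (hx : IsS1Like p x)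
    (hy : IsS1Like p y) : IsS1Like p (x * y) := by
  have absorb : ∀ {a b c : F k}, IsT3Central c → IsS1Like p (ringComm a b * c) :=
    fun {a b c} hc => Or.inl ⟨a, b * c, hc.ringComm_mul a b⟩
  rcases hx with ⟨a, b, hx⟩ | ⟨u, ys, hys, hx⟩
  · exact (absorb (hy.isT3Central h2)).of_smodEq (T3U.smodEq_mul_right y hx)
  rcases hy with ⟨c, d, hy⟩ | ⟨v, ys', hys', hy⟩
  · have hxc : IsT3Central x := IsS1Like.isT3Central h2 (Or.inr ⟨u, ys, hys, hx⟩)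
    exact (absorb hxc).of_smodEq (((hxc.mul_comm y).symm).trans (T3U.smodEq_mul_right x hy))
  refine Or.inr ⟨u * v, ys ++ ys', fun hp => by simp [hys hp, hys' hp], ?_⟩
  have hQ := (isT3Central_chainProd h2 p ys).mul_comm (v ^ p)
  calc x * y ≡ u ^ p * chainProd p ys * (v ^ p * chainProd p ys') [SMOD T3U k] :=
        T3U.smodEq_mul hx hy
    _ = u ^ p * (chainProd p ys * v ^ p) * chainProd p ys' := by noncomm_ring
    _ ≡ u ^ p * (v ^ p * chainProd p ys) * chainProd p ys' [SMOD T3U k] :=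
        T3U.smodEq_mul_right _ (T3U.smodEq_mul_left _ hQ.symm)
    _ = u ^ p * v ^ p * chainProd p (ys ++ ys') := by rw [chainProd_append]; noncomm_ring
    _ ≡ (u * v) ^ p * chainProd p (ys ++ ys') [SMOD T3U k] :=
        T3U.smodEq_mul_right _ (mul_pow_smodEq h2 (cast_choose_two_eq_zero h2) u v).symm

theorem isS1Like_pow (p : ℕ) (u : F k) : IsS1Like p (u ^ p) :=
  Or.inr ⟨u, [], fun _ => rfl, by simp [chainProd]⟩

theorem isS1Like_list_prod {p : ℕ} [CharP k p] (h2 : (2 : k) ≠ 0) {l : List (F k)}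
    (h : ∀ x ∈ l, IsS1Like p x) : IsS1Like p l.prod := by
  induction l with
  | nil => simpa using isS1Like_pow p (1 : F k)
  | cons x l ih =>
    rw [List.prod_cons]
    exact (h x List.mem_cons_self).mul h2 (ih fun y hy => h y (List.mem_cons_of_mem x hy))

theorem isS1Like_ringComm_mul_pow_mul_pow_of_lt {p : ℕ} [CharP k p] (h2 : (2 : k) ≠ 0)
    (y z : F k) {b c : ℕ} (hb : p ≠ 0 → b < p) (hc : p ≠ 0 → c < p) :
    IsS1Like p (ringComm y z * y ^ b * z ^ c) := by
  by_cases hc1 : ((c + 1 : ℕ) : k) = 0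
  · by_cases hb1 : ((b + 1 : ℕ) : k) = 0
    · rw [CharP.cast_eq_zero_iff k p] at hb1 hc1
      have hp : p ≠ 0 := by rintro rfl; simp at hb1
      have hb' : b = p - 1 := by have := Nat.le_of_dvd b.succ_pos hb1; have := hb hp; omega
      have hc' : c = p - 1 := by have := Nat.le_of_dvd c.succ_pos hc1; have := hc hp; omega
      refine Or.inr ⟨1, [(y, z)], fun h => absurd h hp, ?_⟩
      simp [chainProd, chainFactor, hb', hc']
    · exact IsS1Like.of_ringComm_smodEq_nsmul hb1 (ringComm_pow_mul_pow_mul_smodEq h2 y z b c)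
  · exact IsS1Like.of_ringComm_smodEq_nsmul hc1 (ringComm_mul_pow_mul_pow_smodEq h2 y z b c)

theorem isS1Like_ringComm_mul_pow_mul_pow {p : ℕ} [CharP k p] (h2 : (2 : k) ≠ 0)
    (y z : F k) (b c : ℕ) : IsS1Like p (ringComm y z * y ^ b * z ^ c) := by
  have hsplit : ∀ (w : F k) (n : ℕ), w ^ n = (w ^ (n / p)) ^ p * w ^ (n % p) := fun w n => by
    rw [← pow_mul, ← pow_add, Nat.mul_comm, Nat.div_add_mod]
  have hcentral : ∀ (w : F k) (n : ℕ), IsT3Central ((w ^ n) ^ p) :=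
    fun w n => isT3Central_pow_of_cast_eq_zero (CharP.cast_eq_zero k p) _
  set Y := (y ^ (b / p)) ^ p
  set Z := (z ^ (c / p)) ^ p
  have key : ringComm y z * y ^ b * z ^ c ≡
      Y * Z * (ringComm y z * y ^ (b % p) * z ^ (c % p)) [SMOD T3U k] :=
    calc ringComm y z * y ^ b * z ^ c
        = ringComm y z * Y * (y ^ (b % p) * (Z * z ^ (c % p))) := by
          rw [hsplit y b, hsplit z c]; noncomm_ring
      _ ≡ Y * ringComm y z * (y ^ (b % p) * (Z * z ^ (c % p))) [SMOD T3U k] :=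
          T3U.smodEq_mul_right _ ((hcentral y _).mul_comm _)
      _ = Y * (ringComm y z * y ^ (b % p) * Z) * z ^ (c % p) := by noncomm_ring
      _ ≡ Y * (Z * (ringComm y z * y ^ (b % p))) * z ^ (c % p) [SMOD T3U k] :=
          T3U.smodEq_mul_right _ (T3U.smodEq_mul_left _ ((hcentral z _).mul_comm _))
      _ = Y * Z * (ringComm y z * y ^ (b % p) * z ^ (c % p)) := by noncomm_ring
  refine IsS1Like.of_smodEq (((isS1Like_pow p _).mul h2 (isS1Like_pow p _)).mul h2 ?_) key
  exact isS1Like_ringComm_mul_pow_mul_pow_of_lt h2 y z (fun hp => Nat.mod_lt _ (by omega))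
    (fun hp => Nat.mod_lt _ (by omega))

end S1Like

section CommutatorMonomials

variable {k}

variable (k) in
def word (l : List ℕ) : F k := (l.map (X k)).prod

variable (k) in
def commProd (γ : List (ℕ × ℕ)) : F k := (γ.map fun q => ringComm (X k q.1) (X k q.2)).prod

@[simp] theorem word_nil : word k [] = 1 := rfl

@[simp] theorem word_cons (i : ℕ) (l : List ℕ) : word k (i :: l) = X k i * word k l := by
  simp [word]

@[simp] theorem word_append (l l' : List ℕ) : word k (l ++ l') = word k l * word k l' := by
  simp [word]

@[simp] theorem commProd_nil : commProd k [] = 1 := rfl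

@[simp] theorem commProd_cons (q : ℕ × ℕ) (γ : List (ℕ × ℕ)) :
    commProd k (q :: γ) = ringComm (X k q.1) (X k q.2) * commProd k γ := by
  simp [commProd]

@[simp] theorem commProd_append (γ γ' : List (ℕ × ℕ)) :
    commProd k (γ ++ γ') = commProd k γ * commProd k γ' := by
  simp [commProd]

theorem isT3Central_commProd (γ : List (ℕ × ℕ)) : IsT3Central (commProd k γ) :=
  isT3Central_list_prod fun c hc => by
    obtain ⟨q, -, rfl⟩ := List.mem_map.mp hc
    exact isT3Central_ringComm _ _

def commIdx (γ : List (ℕ × ℕ)) : List ℕ := γ.flatMap fun q => [q.1, q.2]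

@[simp] theorem commIdx_nil : commIdx [] = [] := rfl

@[simp] theorem commIdx_cons (q : ℕ × ℕ) (γ : List (ℕ × ℕ)) :
    commIdx (q :: γ) = q.1 :: q.2 :: commIdx γ := rfl

theorem even_length_commIdx (γ : List (ℕ × ℕ)) : Even (commIdx γ).length := by
  induction γ with
  | nil => simp
  | cons q γ ih => simpa [Nat.even_add_one] using ih

def pairUp : List ℕ → List (ℕ × ℕ)
  | a :: b :: l => (a, b) :: pairUp l
  | _ => []

theorem pairUp_commIdx (γ : List (ℕ × ℕ)) : pairUp (commIdx γ) = γ := by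
  induction γ with
  | nil => rfl
  | cons q γ ih => simp [pairUp, ih]

theorem commIdx_pairUp : ∀ {l : List ℕ}, Even l.length → commIdx (pairUp l) = l
  | [], _ => rfl
  | [_], h => by simp at h
  | a :: b :: l, h => by
    simp only [pairUp, commIdx_cons, commIdx_pairUp (l := l) (by simpa [Nat.even_add_one] using h)]

theorem ringComm_mul_ringComm_add_swap_mem (x a b y : F k) :
    ringComm x a * ringComm b y + ringComm x b * ringComm a y ∈ T3U k := by
  convert neg_mem (ringComm_mul_ringComm_add_mem a x b y) using 1
  rw [ringComm_swap x a, ringComm_swap x b, neg_mul, neg_mul, neg_add]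

theorem commProd_pairUp_swap :
    ∀ (u : List ℕ) (a b : ℕ) (v : List ℕ), Even (u ++ a :: b :: v).length →
      commProd k (pairUp (u ++ a :: b :: v)) ≡ -commProd k (pairUp (u ++ b :: a :: v))
        [SMOD T3U k]
  | [], a, b, v, _ => by simp [pairUp, ringComm_swap (X k a)]
  | [_], _, _, [], h => absurd h (by simp [Nat.even_add_one])
  | [x], a, b, y :: v, _ => by
    have h : ringComm (X k x) (X k a) * ringComm (X k b) (X k y) ≡
        -(ringComm (X k x) (X k b) * ringComm (X k a) (X k y)) [SMOD T3U k] :=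
      SModEq.sub_mem.mpr (by
        simpa using ringComm_mul_ringComm_add_swap_mem (X k x) (X k a) (X k b) (X k y))
    simpa [pairUp, ← mul_assoc] using T3U.smodEq_mul_right (commProd k (pairUp v)) h
  | x :: w :: u, a, b, v, h => by
    simpa [pairUp] using T3U.smodEq_mul_left (ringComm (X k x) (X k w))
      (commProd_pairUp_swap u a b v (by simpa [Nat.even_add_one] using h))

theorem commProd_pairUp_perm {l l' : List ℕ} (h : l.Perm l') (u : List ℕ)
    (he : Even (u ++ l).length) :
    ∃ ε : k, commProd k (pairUp (u ++ l)) ≡ ε • commProd k (pairUp (u ++ l')) [SMOD T3U k] := by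
  induction h generalizing u with
  | nil => exact ⟨1, by simp⟩
  | cons x _ ih => simpa using ih (u ++ [x]) (by simpa using he)
  | swap x y l => exact ⟨-1, by simpa using commProd_pairUp_swap u y x l he⟩
  | trans h₁₂ _ ih₁₂ ih₂₃ =>
    obtain ⟨ε₁, h₁⟩ := ih₁₂ u he
    obtain ⟨ε₂, h₂⟩ := ih₂₃ u (by simpa [← h₁₂.length_eq] using he)
    exact ⟨ε₁ * ε₂, by simpa [mul_smul] using h₁.trans (h₂.smul ε₁)⟩

theorem commProd_smodEq_of_perm {γ : List (ℕ × ℕ)} {l : List ℕ} (h : (commIdx γ).Perm l) :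
    ∃ ε : k, commProd k γ ≡ ε • commProd k (pairUp l) [SMOD T3U k] := by
  simpa [pairUp_commIdx] using commProd_pairUp_perm h [] (even_length_commIdx γ)

theorem commProd_mem_of_not_nodup {γ : List (ℕ × ℕ)} (h : ¬(commIdx γ).Nodup) :
    commProd k γ ∈ T3U k := by
  obtain ⟨x, hx⟩ : ∃ x, List.Duplicate x (commIdx γ) := by
    simpa [List.nodup_iff_forall_not_duplicate] using h
  obtain ⟨l, hl⟩ := (List.duplicate_iff_sublist.mp hx).exists_perm_append
  obtain ⟨ε, hε⟩ := commProd_smodEq_of_perm (k := k) hl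
  simp only [List.cons_append, List.nil_append, pairUp, commProd_cons, ringComm_self, zero_mul,
    smul_zero] at hε
  exact SModEq.zero.mp hε

theorem exists_commProd_smodEq_isChain {γ : List (ℕ × ℕ)} (h : (commIdx γ).Nodup) :
    ∃ (ε : k) (γ' : List (ℕ × ℕ)), List.IsChain (· < ·) (commIdx γ') ∧
      commProd k γ ≡ ε • commProd k γ' [SMOD T3U k] := by
  set s := (commIdx γ).toFinset.sort
  have hperm : (commIdx γ).Perm s :=
    (List.perm_ext_iff_of_nodup h (Finset.sort_nodup _ _)).mpr fun a => by simp
  have hs : commIdx (pairUp s) = s :=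
    commIdx_pairUp (hperm.length_eq ▸ even_length_commIdx γ)
  obtain ⟨ε, hε⟩ := commProd_smodEq_of_perm (k := k) hperm
  refine ⟨ε, pairUp s, ?_, hε⟩
  rw [hs]
  exact List.sortedLT_iff_isChain.mp (Finset.sortedLT_sort _)

end CommutatorMonomials

section NormalForm

variable {k}

theorem word_flatMap_replicate (L : List ℕ) (f : ℕ → ℕ) :
    word k (L.flatMap fun v => List.replicate (f v) v) = (L.map fun v => X k v ^ f v).prod := by
  induction L with
  | nil => rfl
  | cons v L ih => rw [List.flatMap_cons, word_append, ih]; simp [word]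

theorem count_flatMap_replicate {L : List ℕ} (hL : L.Nodup) (f : ℕ → ℕ) (a : ℕ) :
    (L.flatMap fun v => List.replicate (f v) v).count a = if a ∈ L then f a else 0 := by
  induction L with
  | nil => simp
  | cons v L ih =>
    rw [List.nodup_cons] at hL
    rw [List.flatMap_cons, List.count_append, ih hL.2, List.count_replicate]
    by_cases hav : a = v
    · subst hav; simp [hL.1]
    · simp [Ne.symm hav, hav]

theorem perm_flatMap_replicate_count {l L : List ℕ} (hL : L.Nodup) (hl : ∀ a ∈ l, a ∈ L) :
    l.Perm (L.flatMap fun v => List.replicate (l.count v) v) := by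
  refine List.perm_iff_count.mpr fun a => ?_
  rw [count_flatMap_replicate hL]
  split_ifs with ha
  · rfl
  · exact List.count_eq_zero.mpr fun h => ha (hl a h)

theorem prod_map_commIdx (γ : List (ℕ × ℕ)) (f : ℕ → ℕ) :
    ((commIdx γ).map fun v => X k v ^ f v).prod =
      (γ.map fun q => X k q.1 ^ f q.1 * X k q.2 ^ f q.2).prod := by
  induction γ with
  | nil => rfl
  | cons q γ ih => simp [ih, mul_assoc]

theorem endIdx_map (γ : List (ℕ × ℕ)) (f : ℕ → ℕ) :
    endIdx (γ.map fun q => ((q.1, f q.1), (q.2, f q.2))) = commIdx γ := by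
  induction γ with
  | nil => rfl
  | cons q γ ih => simp [endIdx, ih]

theorem commProd_mul_prod_smodEq_endProd (γ : List (ℕ × ℕ)) (f : ℕ → ℕ) :
    commProd k γ * (γ.map fun q => X k q.1 ^ f q.1 * X k q.2 ^ f q.2).prod ≡
      endProd k (γ.map fun q => ((q.1, f q.1), (q.2, f q.2))) [SMOD T3U k] := by
  induction γ with
  | nil => simp [endProd]
  | cons q γ ih =>
    set P := X k q.1 ^ f q.1 * X k q.2 ^ f q.2
    have hP := (isT3Central_commProd γ).mul_comm P
    calc commProd k (q :: γ) * ((q :: γ).map fun q => X k q.1 ^ f q.1 * X k q.2 ^ f q.2).prod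
        = ringComm (X k q.1) (X k q.2) * (commProd k γ * P) *
            (γ.map fun q => X k q.1 ^ f q.1 * X k q.2 ^ f q.2).prod := by simp [P, mul_assoc]
      _ ≡ ringComm (X k q.1) (X k q.2) * (P * commProd k γ) *
            (γ.map fun q => X k q.1 ^ f q.1 * X k q.2 ^ f q.2).prod [SMOD T3U k] :=
          T3U.smodEq_mul_right _ (T3U.smodEq_mul_left _ hP.symm)
      _ = ringComm (X k q.1) (X k q.2) * P *
            (commProd k γ * (γ.map fun q => X k q.1 ^ f q.1 * X k q.2 ^ f q.2).prod) := by
          noncomm_ring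
      _ ≡ ringComm (X k q.1) (X k q.2) * P *
            endProd k (γ.map fun q => ((q.1, f q.1), (q.2, f q.2))) [SMOD T3U k] :=
          T3U.smodEq_mul_left _ ih
      _ = _ := by simp only [endProd, List.map_cons, List.prod_cons, P, mul_assoc]

theorem begProd_mul_endProd_mem {p : ℕ} [CharP k p] (h2 : (2 : k) ≠ 0)
    {bs : List (ℕ × ℕ)} {es : List ((ℕ × ℕ) × (ℕ × ℕ))}
    (hbs : List.IsChain (· < ·) (bs.map Prod.fst)) (hpos : ∀ q ∈ bs, 1 ≤ q.2)
    (hes : List.IsChain (· < ·) (endIdx es)) (hdisj : ∀ q ∈ bs, q.1 ∉ endIdx es) :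
    begProd k bs * endProd k es ∈ R1S1T3 k p := by
  by_cases hex : ∃ q ∈ bs, ¬p ∣ q.2
  · have hne : bs ≠ [] := by obtain ⟨q, hq, -⟩ := hex; exact List.ne_nil_of_mem hq
    exact Submodule.mem_sup_left (Submodule.mem_sup_left (Submodule.subset_span
      (Or.inr ⟨bs, es, ⟨Or.inl hne, hbs, hpos, hes, hdisj⟩, hne, hex, rfl⟩)))
  push Not at hex
  unfold begProd endProd
  refine IsS1Like.mem_R1S1T3 (IsS1Like.mul h2 (isS1Like_list_prod h2 ?_) (isS1Like_list_prod h2 ?_))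
  · simp only [List.mem_map]
    rintro _ ⟨q, hq, rfl⟩
    rw [← Nat.div_mul_cancel (hex q hq), pow_mul]
    exact isS1Like_pow p _
  · simp only [List.mem_map]
    rintro _ ⟨e, -, rfl⟩
    exact isS1Like_ringComm_mul_pow_mul_pow h2 _ _ _ _

theorem ringComm_word_mul_commProd_smodEq (u v : List ℕ) (a b : ℕ) (γ : List (ℕ × ℕ)) :
    word k (u ++ a :: b :: v) * commProd k γ - word k (u ++ b :: a :: v) * commProd k γ ≡
      word k (u ++ v) * commProd k (γ ++ [(a, b)]) [SMOD T3U k] := by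
  set t := ringComm (X k a) (X k b)
  have ht := ((isT3Central_ringComm (X k a) (X k b)).mul_comm (word k v * commProd k γ)).symm
  calc _ = word k u * (t * (word k v * commProd k γ)) := by
        simp only [word_append, word_cons, t, ringComm]; noncomm_ring
    _ ≡ word k u * (word k v * commProd k γ * t) [SMOD T3U k] := T3U.smodEq_mul_left _ ht
    _ = _ := by simp [t, mul_assoc]

theorem word_mul_commProd_smodEq_of_perm {p n : ℕ}
    (ih : ∀ (l : List ℕ) (γ : List (ℕ × ℕ)), l.length < n → word k l * commProd k γ ∈ R1S1T3 k p)
    {l l' : List ℕ} (h : l.Perm l') (u : List ℕ) (hlen : (u ++ l).length ≤ n)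
    (γ : List (ℕ × ℕ)) :
    word k (u ++ l) * commProd k γ ≡ word k (u ++ l') * commProd k γ [SMOD R1S1T3 k p] := by
  induction h generalizing u with
  | nil => rfl
  | cons x _ ih' => simpa using ih' (u ++ [x]) (by simpa using hlen)
  | swap x y l =>
    refine SModEq.sub_mem.mpr (mem_R1S1T3_of_smodEq
      (ringComm_word_mul_commProd_smodEq u l y x γ) (ih _ _ ?_))
    simp only [List.length_append, List.length_cons] at hlen ⊢
    omega
  | trans h₁₂ _ ih₁₂ ih₂₃ =>
    exact (ih₁₂ u hlen).trans (ih₂₃ u (by simpa [← h₁₂.length_eq] using hlen))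

def regroup (l L : List ℕ) : List ℕ :=
  ((l.toFinset.filter (· ∉ L)).sort ++ L).flatMap fun v => List.replicate (l.count v) v

theorem perm_regroup (l : List ℕ) {L : List ℕ} (hL : L.Nodup) : l.Perm (regroup l L) := by
  refine perm_flatMap_replicate_count (List.nodup_append.mpr
    ⟨Finset.sort_nodup _ _, hL, fun a ha b hb hab => by simp_all⟩) fun a ha => ?_
  by_cases haL : a ∈ L <;> simp [ha, haL]

theorem word_regroup_mul_commProd_mem {p : ℕ} [CharP k p] (h2 : (2 : k) ≠ 0) (l : List ℕ)
    {γ : List (ℕ × ℕ)} (hγ : List.IsChain (· < ·) (commIdx γ)) :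
    word k (regroup l (commIdx γ)) * commProd k γ ∈ R1S1T3 k p := by
  set D := (l.toFinset.filter (· ∉ commIdx γ)).sort
  have hnormal : word k (regroup l (commIdx γ)) * commProd k γ ≡
      begProd k (D.map fun v => (v, l.count v)) *
        endProd k (γ.map fun q => ((q.1, l.count q.1), (q.2, l.count q.2))) [SMOD T3U k] := by
    rw [regroup, List.flatMap_append, word_append, word_flatMap_replicate, word_flatMap_replicate,
      prod_map_commIdx, mul_assoc, begProd, List.map_map]
    exact T3U.smodEq_mul_left _ (((isT3Central_commProd γ).mul_comm _).trans
      (commProd_mul_prod_smodEq_endProd γ fun v => l.count v))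
  have hidx : endIdx (γ.map fun q => ((q.1, l.count q.1), (q.2, l.count q.2))) = commIdx γ :=
    endIdx_map γ fun v => l.count v
  have hD : ∀ v ∈ D, v ∈ l ∧ v ∉ commIdx γ := fun v hv => by simpa [D] using hv
  refine mem_R1S1T3_of_smodEq hnormal (begProd_mul_endProd_mem h2 ?_ ?_ (by rwa [hidx]) ?_)
  · simp only [List.map_map, Function.comp_def, List.map_id']
    exact List.sortedLT_iff_isChain.mp (Finset.sortedLT_sort _)
  · simp only [List.mem_map]
    rintro _ ⟨v, hv, rfl⟩
    exact List.count_pos_iff.mpr (hD v hv).1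
  · simp only [hidx, List.mem_map]
    rintro _ ⟨v, hv, rfl⟩
    exact (hD v hv).2

theorem word_mul_commProd_mem_of_isChain {p : ℕ} [CharP k p] (h2 : (2 : k) ≠ 0)
    {l : List ℕ} {γ : List (ℕ × ℕ)}
    (ih : ∀ (l' : List ℕ) (γ' : List (ℕ × ℕ)), l'.length < l.length →
      word k l' * commProd k γ' ∈ R1S1T3 k p)
    (hγ : List.IsChain (· < ·) (commIdx γ)) : word k l * commProd k γ ∈ R1S1T3 k p := by
  have hperm := perm_regroup l ((List.isChain_iff_pairwise.mp hγ).imp ne_of_lt)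
  have hwords := word_mul_commProd_smodEq_of_perm ih hperm [] le_rfl γ
  rw [List.nil_append, List.nil_append] at hwords
  exact SModEq.zero.mp
    (hwords.trans (SModEq.zero.mpr (word_regroup_mul_commProd_mem h2 l hγ)))

theorem word_mul_commProd_mem {p : ℕ} [CharP k p] (h2 : (2 : k) ≠ 0) (l : List ℕ)
    (γ : List (ℕ × ℕ)) : word k l * commProd k γ ∈ R1S1T3 k p := by
  induction hn : l.length using Nat.strong_induction_on generalizing l γ with
  | _ n ih =>
  by_cases hnd : (commIdx γ).Nodup
  · obtain ⟨ε, γ', hchain, hγ⟩ := exists_commProd_smodEq_isChain (k := k) hnd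
    refine mem_R1S1T3_of_smodEq (T3U.smodEq_mul_left (word k l) hγ) ?_
    rw [mul_smul_comm]
    exact Submodule.smul_mem _ _ (word_mul_commProd_mem_of_isChain h2
      (fun l' γ' hl' => ih _ (hn ▸ hl') l' γ' rfl) hchain)
  · exact Submodule.mem_sup_right (T3U.mul_mem_left _ (commProd_mem_of_not_nodup hnd))

theorem span_range_word : Submodule.span k (Set.range (word k)) = ⊤ := by
  rw [eq_top_iff, ← Algebra.top_toSubmodule, ← FreeAlgebra.adjoin_range_ι,
    Algebra.adjoin_eq_span]
  refine Submodule.span_mono fun x hx => ?_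
  induction hx using Submonoid.closure_induction with
  | mem x hx => obtain ⟨i, rfl⟩ := hx; exact ⟨[i], by simp [X]⟩
  | one => exact ⟨[], rfl⟩
  | mul x y _ _ hx hy =>
    obtain ⟨l, rfl⟩ := hx
    obtain ⟨l', rfl⟩ := hy
    exact ⟨l ++ l', word_append l l'⟩

end NormalForm

/-- Let k be a field of characteristic p ≠ 2.  Then `k⟨X⟩ = R₁ + S₁ + T⁽³⁾`. -/
theorem statement16 (p : ℕ) (hp : ringChar k = p) (hp2 : p ≠ 2) :
    R1space k p ⊔ S1space k p ⊔ T3U k = ⊤ := by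
  have : CharP k p := hp ▸ ringChar.charP k
  have h2 : (2 : k) ≠ 0 := Ring.two_ne_zero (hp ▸ hp2)
  rw [eq_top_iff, ← span_range_word, Submodule.span_le]
  rintro _ ⟨l, rfl⟩
  simpa [R1S1T3] using word_mul_commProd_mem h2 l []

end
end
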